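/- arXiv:2204.10862 — 2 statements merged into one kernel-verified Lean document; each statement's English description precedes it below -/
import Mathlib

section
/- Let a < b be real numbers and let p be a real polynomial of degree n ≥ 1 that is orthogonal in L²((a,b); ℝ) to every polynomial of degree strictly less than n, i.e., ∫_a^b p(x) x^k dx = 0 for all integers 0 ≤ k < n. Then p has exactly n distinct real roots, all of which lie in the open interval (a,b). -/
open Polynomial MeasureTheory Set Function

/-- **Zeros of orthogonal polynomials are real, simple, and lie in `(a,b)`.**
Let `a < b` and let `p` be a real polynomial of degree `n ≥ 1` orthogonal in
`L²((a,b); ℝ)` to every polynomial of degree `< n`, i.e. `∫_a^b p(x) xᵏ dx = 0`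
for all `0 ≤ k < n`.  Then `p` has exactly `n` distinct real roots (so `p` splits
over `ℝ` with all roots simple), and all of them lie in the open interval `(a,b)`. -/
theorem orthogonal_polynomial_roots_real_simple_in_Ioo (a b : ℝ) (hab : a < b)
    (p : Polynomial ℝ) (n : ℕ) (hn : 1 ≤ n) (hdeg : p.natDegree = n)
    (horth : ∀ k : ℕ, k < n → ∫ x in a..b, p.eval x * x ^ k = 0) :
    p.roots.card = n ∧ p.roots.toFinset.card = n ∧ ∀ x ∈ p.roots, x ∈ Set.Ioo a b := by
  classical
  have hp0 : p ≠ 0 := by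
    intro h
    rw [h, natDegree_zero] at hdeg
    omega
  set M : Multiset ℝ := p.roots.filter (fun r => r ∈ Set.Ioo a b) with hMdef
  have hMle : M ≤ p.roots := Multiset.filter_le _ _
  set P : Polynomial ℝ := (M.map fun r => X - C r).prod with hPdef
  have hPdvd : P ∣ p :=
    (Multiset.prod_dvd_prod_of_le (Multiset.map_le_map hMle)).trans p.prod_multiset_X_sub_C_dvd
  obtain ⟨g, hpg⟩ := hPdvd
  have hP0 : P ≠ 0 := by
    apply Multiset.prod_ne_zero
    simp only [Multiset.mem_map]
    rintro ⟨r, -, hr⟩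
    exact X_sub_C_ne_zero r hr
  have hg0 : g ≠ 0 := by
    rintro rfl
    rw [mul_zero] at hpg
    exact hp0 hpg
  have hProots : P.roots = M := roots_multiset_prod_X_sub_C M
  -- g has no roots in Ioo a b
  have hgroots : ∀ x ∈ Set.Ioo a b, g.eval x ≠ 0 := by
    intro x hx hgx
    have hcount : p.roots.count x = P.roots.count x + g.roots.count x := by
      rw [hpg, roots_mul (hpg ▸ hp0), Multiset.count_add]
    have hMC : M.count x = p.roots.count x := by
      rw [hMdef, Multiset.count_filter, if_pos hx]
    rw [hProots, hMC] at hcount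
    have h1 : 1 ≤ g.roots.count x := by
      rw [count_roots]
      exact (le_rootMultiplicity_iff hg0).mpr (by simpa using dvd_iff_isRoot.mpr hgx)
    omega
  -- g has constant sign on Ioo a b
  have hIooconn : OrdConnected (Set.Ioo a b) := ordConnected_Ioo
  have hsign : (∀ x ∈ Set.Ioo a b, 0 < g.eval x) ∨ (∀ x ∈ Set.Ioo a b, g.eval x < 0) := by
    by_contra h
    push_neg at h
    obtain ⟨⟨x, hx, hx'⟩, ⟨y, hy, hy'⟩⟩ := h
    have hxneg : g.eval x < 0 := lt_of_le_of_ne hx' (hgroots x hx)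
    have hypos : 0 < g.eval y := lt_of_le_of_ne hy' (Ne.symm (hgroots y hy))
    have hsub : Set.uIcc x y ⊆ Set.Ioo a b := hIooconn.uIcc_subset hx hy
    have := intermediate_value_uIcc (a := x) (b := y) (f := fun t => g.eval t)
      (g.continuous_aeval.continuousOn)
    have h0 : (0:ℝ) ∈ Set.uIcc (g.eval x) (g.eval y) :=
      Set.mem_uIcc.mpr (Or.inl ⟨hxneg.le, hypos.le⟩)
    obtain ⟨c, hc, hc0⟩ := this h0
    exact hgroots c (hsub hc) hc0
  set O : Finset ℝ := M.toFinset.filter (fun r => Odd (M.count r)) with hOdef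
  set q : Polynomial ℝ := ∏ r ∈ O, (X - C r) with hqdef
  have hqdeg : q.natDegree = O.card := by
    rw [hqdef, natDegree_prod _ _ (fun r _ => X_sub_C_ne_zero r)]
    simp [natDegree_X_sub_C]
  -- evaluation of P * q is a product of even powers
  have hPq : ∀ x : ℝ, P.eval x * q.eval x
      = ∏ r ∈ M.toFinset, (x - r) ^ (M.count r + if Odd (M.count r) then 1 else 0) := by
    intro x
    have hPx : P.eval x = ∏ r ∈ M.toFinset, (x - r) ^ (M.count r) := by
      rw [hPdef, eval_multiset_prod, Multiset.map_map]
      simp only [Function.comp, eval_sub, eval_X, eval_C]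
      exact Finset.prod_multiset_map_count M _
    have hqx : q.eval x = ∏ r ∈ M.toFinset, (x - r) ^ (if Odd (M.count r) then 1 else 0) := by
      rw [hqdef, eval_prod]
      simp only [eval_sub, eval_X, eval_C]
      rw [hOdef, Finset.prod_filter]
      refine (Finset.prod_congr rfl fun r _ => ?_).symm
      by_cases h : Odd (M.count r) <;> simp [h]
    rw [hPx, hqx, ← Finset.prod_mul_distrib]
    exact Finset.prod_congr rfl fun r _ => (pow_add _ _ _).symm
  have heven : ∀ r, Even (M.count r + if Odd (M.count r) then 1 else 0) := by
    intro r
    by_cases h : Odd (M.count r)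
    · rw [if_pos h]; exact h.add_one
    · rw [if_neg h]; simpa using Nat.not_odd_iff_even.mp h
  have hPq_nonneg : ∀ x : ℝ, 0 ≤ P.eval x * q.eval x := by
    intro x
    rw [hPq]
    exact Finset.prod_nonneg fun r _ => (heven r).pow_nonneg _
  have hPq_pos : ∀ x : ℝ, x ∉ M.toFinset → 0 < P.eval x * q.eval x := by
    intro x hx
    rw [hPq]
    refine Finset.prod_pos fun r hr => (heven r).pow_pos fun h => hx ?_
    rw [sub_eq_zero] at h
    rw [h]
    exact hr
  -- the main contradiction argument
  have hcard : n ≤ O.card := by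
    by_contra hO
    push_neg at hO
    have hqn : q.natDegree < n := hqdeg ▸ hO
    -- orthogonality gives integral of p * q = 0
    have hint0 : (∫ x in a..b, p.eval x * q.eval x) = 0 := by
      have hqe : ∀ x : ℝ, q.eval x = ∑ k ∈ Finset.range (q.natDegree + 1), q.coeff k * x ^ k :=
        fun x => eval_eq_sum_range x
      have : (∫ x in a..b, p.eval x * q.eval x)
          = ∑ k ∈ Finset.range (q.natDegree + 1), ∫ x in a..b, q.coeff k * (p.eval x * x ^ k) := by
        rw [← intervalIntegral.integral_finset_sum]
        · congr 1
          ext x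
          rw [hqe x, Finset.mul_sum]
          exact Finset.sum_congr rfl fun k _ => by ring
        · intro k _
          exact (continuous_const.mul ((p.continuous).mul (continuous_pow k))).intervalIntegrable a b
      rw [this]
      refine Finset.sum_eq_zero fun k hk => ?_
      rw [intervalIntegral.integral_const_mul, horth k ?_, mul_zero]
      have := Finset.mem_range.mp hk
      omega
    -- but the integral is positive
    set ε : ℝ := if ∀ x ∈ Set.Ioo a b, 0 < g.eval x then 1 else -1 with hεdef
    have hεg : ∀ x ∈ Set.Ioo a b, 0 < ε * g.eval x := by
      intro x hx
      by_cases h : ∀ x ∈ Set.Ioo a b, 0 < g.eval x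
      · rw [hεdef, if_pos h, one_mul]; exact h x hx
      · rw [hεdef, if_neg h]
        have := (hsign.resolve_left h) x hx
        nlinarith
    set f : ℝ → ℝ := fun x => ε * (p.eval x * q.eval x) with hfdef
    have hfeq : ∀ x : ℝ, f x = (P.eval x * q.eval x) * (ε * g.eval x) := by
      intro x
      rw [hfdef]
      simp only [hpg, eval_mul]
      ring
    have hf_nonneg : ∀ x ∈ Set.Ioo a b, 0 ≤ f x := fun x hx => by
      rw [hfeq]
      exact mul_nonneg (hPq_nonneg x) (hεg x hx).le
    have hf_pos : ∀ x ∈ Set.Ioo a b, x ∉ M.toFinset → 0 < f x := fun x hx hxM => by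
      rw [hfeq]
      exact mul_pos (hPq_pos x hxM) (hεg x hx)
    have hfi : IntervalIntegrable f volume a b :=
      (continuous_const.mul ((p.continuous).mul (q.continuous))).intervalIntegrable a b
    have hpos : 0 < ∫ x in a..b, f x := by
      have h1 : 0 ≤ᵐ[volume.restrict (Set.uIoc a b)] f := by
        rw [Set.uIoc_of_le hab.le]
        refine ae_restrict_of_ae_eq_of_ae_restrict Ioo_ae_eq_Ioc ?_
        rw [ae_restrict_iff' measurableSet_Ioo]
        filter_upwards with x hx using hf_nonneg x hx
      rw [intervalIntegral.integral_pos_iff_support_of_nonneg_ae' h1 hfi]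
      refine ⟨hab, ?_⟩
      have hsupp : Set.Ioo a b \ (M.toFinset : Set ℝ) ⊆ support f ∩ Set.Ioc a b := by
        rintro x ⟨hx, hxM⟩
        exact ⟨mem_support.mpr (hf_pos x hx hxM).ne', Set.Ioo_subset_Ioc_self hx⟩
      refine lt_of_lt_of_le ?_ (measure_mono hsupp)
      rw [measure_diff_null (Set.Finite.measure_zero (M.toFinset.finite_toSet) _)]
      rw [Real.volume_Ioo]
      exact ENNReal.ofReal_pos.mpr (by linarith)
    have : (∫ x in a..b, f x) = 0 := by
      rw [hfdef]
      simp only [intervalIntegral.integral_const_mul, hint0, mul_zero]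
    exact absurd this hpos.ne'
  -- bookkeeping
  have hsub1 : O ⊆ M.toFinset := Finset.filter_subset _ _
  have hsub2 : M.toFinset ⊆ p.roots.toFinset :=
    Multiset.toFinset_subset.mpr (Multiset.subset_of_le hMle)
  have hc1 : O.card ≤ M.toFinset.card := Finset.card_le_card hsub1
  have hc2 : M.toFinset.card ≤ p.roots.toFinset.card := Finset.card_le_card hsub2
  have hc3 : p.roots.toFinset.card ≤ p.roots.card := Multiset.toFinset_card_le _
  have hc4 : p.roots.card ≤ n := hdeg ▸ p.card_roots'
  have hcards : p.roots.card = n := le_antisymm hc4 (by omega)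
  have htf : p.roots.toFinset.card = n := by omega
  have hMeq : M.toFinset = p.roots.toFinset :=
    Finset.eq_of_subset_of_card_le hsub2 (by omega)
  refine ⟨hcards, htf, fun x hx => ?_⟩
  have : x ∈ M.toFinset := hMeq ▸ (Multiset.mem_toFinset.mpr hx)
  have := Multiset.mem_toFinset.mp this
  rw [hMdef] at this
  exact (Multiset.mem_filter.mp this).2
end

section
/- Hurwitz-type persistence of zeros under locally uniform convergence: let U ⊆ ℂ be open and connected, let f and f_n (n ∈ ℕ) be holomorphic on U, and suppose f_n → f uniformly on compact subsets of U. If f is not identically zero on U and f(z₀) = 0 for some z₀ ∈ U, then for every ε > 0 there exists N such that for all n ≥ N the function f_n has a zero z with |z − z₀| < ε. -/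
/-!
The zeros of `f` are isolated, so on a small circle around `z₀` we have `‖f‖ ≥ m > 0`. For
large `n`, uniform convergence gives `‖F n‖ ≥ m / 2` on the circle but `‖F n z₀‖ < m / 2`; if
`F n` had no zero in the disc, the maximum modulus principle for `1 / F n` would forbid this.
-/

open Metric Filter Topology

theorem exists_pos_lt_closedBall_subset_forall_mem_sphere {α : Type*} [PseudoMetricSpace α]
    {x : α} {u : Set α} {p : α → Prop} (hu : u ∈ 𝓝 x) (hp : ∀ᶠ z in 𝓝[≠] x, p z)
    {ε : ℝ} (hε : 0 < ε) :
    ∃ r, 0 < r ∧ r < ε ∧ closedBall x r ⊆ u ∧ ∀ z ∈ sphere x r, p z := by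
  have hq : ∀ᶠ z in 𝓝 x, z ∈ u ∧ (z ≠ x → p z) :=
    Eventually.and hu (eventually_nhdsWithin_iff.mp hp)
  obtain ⟨r, hball, hr⟩ :=
    ((eventually_closedBall_subset hq).filter_mono nhdsWithin_le_nhds |>.and
      (Ioo_mem_nhdsGT hε)).exists
  exact ⟨r, hr.1, hr.2, fun z hz => (hball hz).1,
    fun z hz => (hball (sphere_subset_closedBall hz)).2 (ne_of_mem_sphere hz hr.1.ne')⟩

theorem IsCompact.exists_pos_forall_le_norm {X E : Type*} [TopologicalSpace X]
    [NormedAddCommGroup E] {K : Set X} (hK : IsCompact K) {g : X → E} (hg : ContinuousOn g K)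
    (h0 : ∀ x ∈ K, g x ≠ 0) : ∃ m > 0, ∀ x ∈ K, m ≤ ‖g x‖ := by
  rcases K.eq_empty_or_nonempty with rfl | hne
  · exact ⟨1, one_pos, by simp⟩
  obtain ⟨w, hw, hmin⟩ := hK.exists_isMinOn hne hg.norm
  exact ⟨‖g w‖, norm_pos_iff.mpr (h0 w hw), fun x hx => hmin hx⟩

section MinimumModulus

variable {E : Type*} [NormedAddCommGroup E] [NormedSpace ℂ E] [Nontrivial E]

theorem exists_mem_ball_eq_zero_of_norm_center_lt {g : E → ℂ} {c : E} {r m : ℝ} (hr : 0 < r)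
    (hg : DifferentiableOn ℂ g (closedBall c r)) (hsphere : ∀ z ∈ sphere c r, m ≤ ‖g z‖)
    (hc : ‖g c‖ < m) : ∃ z ∈ ball c r, g z = 0 := by
  by_contra! hball
  have hm : 0 < m := (norm_nonneg _).trans_lt hc
  have hne : ∀ z ∈ closedBall c r, g z ≠ 0 := by
    intro z hz
    rcases eq_or_lt_of_le (mem_closedBall.mp hz) with hzr | hzr
    · exact norm_pos_iff.mp (hm.trans_le (hsphere z hzr))
    · exact hball z hzr
  -- the maximum modulus principle applied to `1 / g`
  have hinv : DiffContOnCl ℂ (fun z => (g z)⁻¹) (ball c r) :=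
    (hg.inv hne).diffContOnCl_ball le_rfl
  have hbound : ∀ z ∈ frontier (ball c r), ‖(g z)⁻¹‖ ≤ m⁻¹ := by
    rw [frontier_ball c hr.ne']
    intro z hz
    rw [norm_inv]
    exact inv_anti₀ hm (hsphere z hz)
  have hcenter := Complex.norm_le_of_forall_mem_frontier_norm_le isBounded_ball hinv hbound
    (subset_closure (mem_ball_self hr))
  rw [norm_inv, inv_le_inv₀ (norm_pos_iff.mpr (hne c (mem_closedBall_self hr.le))) hm] at hcenter
  exact hc.not_ge hcenter

variable [ProperSpace E]

theorem TendstoUniformlyOn.eventually_exists_mem_ball_eq_zero {ι : Type*} {l : Filter ι}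
    {F : ι → E → ℂ} {f : E → ℂ} {c : E} {r : ℝ} (hr : 0 < r)
    (hF : ∀ᶠ n in l, DifferentiableOn ℂ (F n) (closedBall c r))
    (hconv : TendstoUniformlyOn F f l (closedBall c r)) (hf : ContinuousOn f (sphere c r))
    (hfc : f c = 0) (hsphere : ∀ z ∈ sphere c r, f z ≠ 0) :
    ∀ᶠ n in l, ∃ z ∈ ball c r, F n z = 0 := by
  obtain ⟨m, hm, hfm⟩ := (isCompact_sphere c r).exists_pos_forall_le_norm hf hsphere
  filter_upwards [hF, Metric.tendstoUniformlyOn_iff.mp hconv (m / 2) (half_pos hm)]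
    with n hFn hclose
  refine exists_mem_ball_eq_zero_of_norm_center_lt (m := m / 2) hr hFn (fun z hz => ?_) ?_
  · have hdist := hclose z (sphere_subset_closedBall hz)
    rw [dist_eq_norm] at hdist
    linarith [hfm z hz, norm_sub_norm_le (f z) (F n z)]
  · simpa [hfc, dist_eq_norm] using hclose c (mem_closedBall_self hr.le)

end MinimumModulus

/-- **Hurwitz-type persistence of zeros under locally uniform convergence.**
Let `U ⊆ ℂ` be open and connected, let `f` and the `F n` be holomorphic on `U`, and
suppose `F n → f` uniformly on every compact subset of `U`.  If `f` is not identically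
zero on `U` and `f z₀ = 0` for some `z₀ ∈ U`, then for every `ε > 0` there is an `N`
such that for all `n ≥ N` the function `F n` has a zero `z ∈ U` with `|z − z₀| < ε`. -/
theorem hurwitz_persistence_of_zeros (U : Set ℂ) (hU : IsOpen U) (hUc : IsConnected U)
    (f : ℂ → ℂ) (F : ℕ → ℂ → ℂ)
    (hf : DifferentiableOn ℂ f U) (hF : ∀ n, DifferentiableOn ℂ (F n) U)
    (hconv : ∀ K : Set ℂ, K ⊆ U → IsCompact K → TendstoUniformlyOn F f Filter.atTop K)
    (hne : ¬∀ z ∈ U, f z = 0) (z₀ : ℂ) (hz₀ : z₀ ∈ U) (hfz₀ : f z₀ = 0)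
    (ε : ℝ) (hε : 0 < ε) :
    ∃ N : ℕ, ∀ n ≥ N, ∃ z ∈ U, F n z = 0 ∧ ‖z - z₀‖ < ε := by
  have hisolated : ∀ᶠ z in 𝓝[≠] z₀, f z ≠ 0 := not_frequently.mp fun hfreq =>
    hne fun z hz => (hf.analyticOnNhd hU).eqOn_zero_of_preconnected_of_frequently_eq_zero
      hUc.isPreconnected hz₀ hfreq hz
  obtain ⟨r, hr, hrε, hrU, hsphere⟩ :=
    exists_pos_lt_closedBall_subset_forall_mem_sphere (hU.mem_nhds hz₀) hisolated hε
  have hzeros := (hconv _ hrU (isCompact_closedBall z₀ r)).eventually_exists_mem_ball_eq_zero hr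
    (Eventually.of_forall fun n => (hF n).mono hrU)
    (hf.continuousOn.mono (sphere_subset_closedBall.trans hrU)) hfz₀ hsphere
  obtain ⟨N, hN⟩ := eventually_atTop.mp hzeros
  refine ⟨N, fun n hn => ?_⟩
  obtain ⟨z, hz, hFz⟩ := hN n hn
  exact ⟨z, hrU (ball_subset_closedBall hz), hFz, (mem_ball_iff_norm.mp hz).trans hrε⟩
end
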